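/- Every graph automorphism of Γ₈ maps the vertex set {v₁, v₂} onto itself and maps the vertex set {a₃, b₃} onto itself. -/

import Mathlib

/-- The vertices of the graph `Γ₈`. -/
inductive V8 : Type
  | v1 | v2 | a1 | a2 | a3 | b1 | b2 | b3
  deriving DecidableEq

open V8

/-- The graph `Γ₈`: the hexagonal cycle `a₁a₂a₃b₁b₂b₃a₁`, the chord `a₃b₃`,
and the four edges `a₁v₁`, `v₁b₁`, `a₂v₂`, `v₂b₂`. -/
def Gamma8 : SimpleGraph V8 :=
  SimpleGraph.fromEdgeSet
    {s(a1, a2), s(a2, a3), s(a3, b1), s(b1, b2), s(b2, b3), s(b3, a1),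
     s(a3, b3),
     s(a1, v1), s(v1, b1), s(a2, v2), s(v2, b2)}

/-! `{v₁, v₂}` is the set of vertices of degree 2, and `{a₃, b₃}` is the set of vertices of
degree 3 all of whose neighbours have degree 3. Both descriptions use only degrees and adjacency,
which every automorphism preserves. -/

theorem Equiv.image_setOf_eq {α : Type*} (e : α ≃ α) {p : α → Prop}
    (h : ∀ x, p (e x) ↔ p x) : e '' {x | p x} = {x | p x} := by
  rw [← Equiv.setOfPred_apply_symm_eq_image_setOfPred]
  ext y
  simpa using (h (e.symm y)).symm

theorem SimpleGraph.Iso.forall_adj_iff {V W : Type*} {G : SimpleGraph V} {G' : SimpleGraph W}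
    (φ : G ≃g G') {p : V → Prop} {q : W → Prop} (h : ∀ y, q (φ y) ↔ p y) (x : V) :
    (∀ y, G'.Adj (φ x) y → q y) ↔ ∀ y, G.Adj x y → p y := by
  simp only [φ.surjective.forall, φ.map_adj_iff, h]

instance : Fintype V8 :=
  ⟨⟨[v1, v2, a1, a2, a3, b1, b2, b3], by decide⟩, fun x => by cases x <;> decide⟩

instance : DecidableRel Gamma8.Adj := fun u w => by
  unfold Gamma8; infer_instance

theorem Gamma8_setOf_degree_eq_two : {x | Gamma8.degree x = 2} = ({v1, v2} : Set V8) := by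
  ext x; cases x <;> decide

theorem Gamma8_setOf_degree_eq_three_forall_adj_degree_eq_three :
    {x | Gamma8.degree x = 3 ∧ ∀ y, Gamma8.Adj x y → Gamma8.degree y = 3} =
      ({a3, b3} : Set V8) := by
  ext x; cases x <;> decide

/-- Every graph automorphism of `Γ₈` maps the vertex set `{v₁, v₂}` onto itself and maps
the vertex set `{a₃, b₃}` onto itself. -/
theorem automorphism_of_Gamma8_preserves_pairs (φ : Gamma8 ≃g Gamma8) :
    ⇑φ '' ({v1, v2} : Set V8) = {v1, v2} ∧
    ⇑φ '' ({a3, b3} : Set V8) = {a3, b3} := by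
  have hdeg (k : ℕ) (x : V8) : Gamma8.degree (φ x) = k ↔ Gamma8.degree x = k := by
    rw [φ.degree_eq]
  rw [← Gamma8_setOf_degree_eq_two, ← Gamma8_setOf_degree_eq_three_forall_adj_degree_eq_three]
  exact ⟨φ.toEquiv.image_setOf_eq (hdeg 2),
    φ.toEquiv.image_setOf_eq fun x => and_congr (hdeg 3 x) (φ.forall_adj_iff (hdeg 3) x)⟩
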